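/- arXiv:2102.13591 — 5 statements merged into one kernel-verified Lean document; each statement's English description precedes it below -/
import Mathlib

section
/- Let (A, +, ·) be a left brace with circle operation a ∘ b = a·b + a + b. Define σ_x(y) = x ∘ y − x and τ_y(x) = t ∘ x − t where t is the inverse of σ_x(y) in the group (A, ∘). Then the map ř(x,y) = (σ_x(y), τ_y(x)) satisfies the set-theoretic braid relation (ř × id)(id × ř)(ř × id) = (id × ř)(ř × id)(id × ř). -/
/-- The circle operation of a left brace: `a ∘ b = a·b + a + b`. -/
def circ {A : Type*} [AddCommGroup A] (mul : A → A → A) (a b : A) : A :=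
  mul a b + a + b

/-- `σ_x(y) = x ∘ y - x`. -/
def sigB {A : Type*} [AddCommGroup A] (mul : A → A → A) (x y : A) : A :=
  circ mul x y - x

/-- `τ_y(x) = t ∘ x - t`, where `t = inv (σ_x(y))` is the `∘`-inverse of `σ_x(y)`. -/
def tauB {A : Type*} [AddCommGroup A] (mul : A → A → A) (inv : A → A) (y x : A) : A :=
  circ mul (inv (sigB mul x y)) x - inv (sigB mul x y)

/-- The set-theoretic map `ř(x,y) = (σ_x(y), τ_y(x))`. -/
def rFun {X : Type*} (σ τ : X → X → X) : X × X → X × X :=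
  fun p => (σ p.1 p.2, τ p.2 p.1)

/-- `ř × id` acting on `X × X × X`. -/
def rFun12 {X : Type*} (σ τ : X → X → X) : X × X × X → X × X × X :=
  fun p => (σ p.1 p.2.1, τ p.2.1 p.1, p.2.2)

/-- `id × ř` acting on `X × X × X`. -/
def rFun23 {X : Type*} (σ τ : X → X → X) : X × X × X → X × X × X :=
  fun p => (p.1, σ p.2.1 p.2.2, τ p.2.2 p.2.1)


/- In a left brace `x ∘ y = σ_x(y) + x`, and `x ↦ σ_x` is a homomorphism from `(A, ∘)` to
`Aut (A, +)`. Since `ř(x, y) = (u, v)` satisfies `u ∘ v = x ∘ y`, `τ` is determined by `σ` through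
`τ_y(x) = σ_x(y)⁻¹ ∘ x ∘ y`, and the homomorphism property gives `σ_u σ_v = σ_x σ_y`. With these
two rules both sides of the braid relation send `(x, y, z)` to the same triple
`(σ_x σ_y z, (σ_x σ_y z)⁻¹ ∘ σ_x(y ∘ z), σ_x(y ∘ z)⁻¹ ∘ x ∘ y ∘ z)`. -/

structure IsLeftBrace {A : Type*} [AddCommGroup A] (mul : A → A → A) (inv : A → A) : Prop where
  mul_add : ∀ a b c, mul a (b + c) = mul a b + mul a c
  circ_assoc : ∀ a b c, circ mul (circ mul a b) c = circ mul a (circ mul b c)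
  zero_circ : ∀ a, circ mul 0 a = a
  inv_circ : ∀ a, circ mul (inv a) a = 0
  circ_inv : ∀ a, circ mul a (inv a) = 0

section

variable {A : Type*} [AddCommGroup A] {mul : A → A → A} {inv : A → A}

local notation "σ" => sigB mul
local notation "τ" => tauB mul inv
local infixr:70 " ⋆ " => circ mul

theorem circ_eq_sigB_add (a b : A) : a ⋆ b = σ a b + a := by
  simp only [sigB, sub_add_cancel]

theorem tauB_eq_sigB (y x : A) : τ y x = σ (inv (σ x y)) x := rfl

namespace IsLeftBrace

variable (h : IsLeftBrace mul inv)
include h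

theorem eq_inv_circ_of_circ_eq {a x r : A} (hx : a ⋆ x = r) : x = inv a ⋆ r := by
  rw [← hx, ← h.circ_assoc, h.inv_circ, h.zero_circ]

theorem inv_circ_circ_circ (w q p : A) : inv (w ⋆ q) ⋆ (w ⋆ p) = inv q ⋆ p :=
  (h.eq_inv_circ_of_circ_eq <| by rw [h.circ_assoc, ← h.circ_assoc q, h.circ_inv, h.zero_circ]).symm

theorem sigB_add (x y z : A) : σ x (y + z) = σ x y + σ x z := by
  simp only [sigB, circ, h.mul_add]
  abel

theorem sigB_sub (x y z : A) : σ x (y - z) = σ x y - σ x z :=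
  eq_sub_of_add_eq (by rw [← h.sigB_add, sub_add_cancel])

theorem zero_sigB (a : A) : σ 0 a = a := by
  rw [sigB, h.zero_circ, sub_zero]

theorem sigB_circ (a b z : A) : σ (a ⋆ b) z = σ a (σ b z) := by
  have hb : σ b z = b ⋆ z - b := rfl
  rw [sigB, h.circ_assoc, circ_eq_sigB_add a (b ⋆ z), circ_eq_sigB_add a b, hb, h.sigB_sub]
  abel

theorem circ_sigB_tauB (x y : A) : σ x y ⋆ τ y x = x ⋆ y := by
  rw [circ_eq_sigB_add, tauB_eq_sigB, ← h.sigB_circ, h.circ_inv, h.zero_sigB,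
    circ_eq_sigB_add x y]
  abel

theorem tauB_eq_inv_circ (y x : A) : τ y x = inv (σ x y) ⋆ x ⋆ y :=
  h.eq_inv_circ_of_circ_eq (h.circ_sigB_tauB x y)

theorem sigB_sigB_sigB_tauB (x y z : A) : σ (σ x y) (σ (τ y x) z) = σ x (σ y z) := by
  rw [← h.sigB_circ, h.circ_sigB_tauB, h.sigB_circ]

theorem sigB_circ_sigB_tauB (x y z : A) : σ x y ⋆ σ (τ y x) z = σ x (y ⋆ z) := by
  rw [circ_eq_sigB_add, h.sigB_sigB_sigB_tauB, circ_eq_sigB_add y z, h.sigB_add]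

theorem sigB_tauB (x y z : A) : σ (τ y x) z = inv (σ x y) ⋆ σ x (y ⋆ z) :=
  h.eq_inv_circ_of_circ_eq (h.sigB_circ_sigB_tauB x y z)

theorem tauB_circ (x y z : A) : τ y x ⋆ z = inv (σ x y) ⋆ x ⋆ y ⋆ z := by
  apply h.eq_inv_circ_of_circ_eq
  rw [← h.circ_assoc, h.circ_sigB_tauB, h.circ_assoc]

theorem braid_left_apply (x y z : A) :
    (rFun12 σ τ ∘ rFun23 σ τ ∘ rFun12 σ τ) (x, y, z) =
      (σ x (σ y z), inv (σ x (σ y z)) ⋆ σ x (y ⋆ z),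
        inv (σ x (y ⋆ z)) ⋆ x ⋆ y ⋆ z) := by
  simp only [Function.comp_apply, rFun12, rFun23, h.sigB_sigB_sigB_tauB, Prod.mk.injEq,
    true_and]
  constructor
  · rw [h.tauB_eq_inv_circ, h.sigB_sigB_sigB_tauB, h.sigB_circ_sigB_tauB]
  · rw [h.tauB_eq_inv_circ, h.sigB_tauB, h.tauB_circ, h.inv_circ_circ_circ]

theorem braid_right_apply (x y z : A) :
    (rFun23 σ τ ∘ rFun12 σ τ ∘ rFun23 σ τ) (x, y, z) =
      (σ x (σ y z), inv (σ x (σ y z)) ⋆ σ x (y ⋆ z),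
        inv (σ x (y ⋆ z)) ⋆ x ⋆ y ⋆ z) := by
  simp only [Function.comp_apply, rFun12, rFun23, Prod.mk.injEq, true_and]
  rw [h.sigB_tauB, h.circ_sigB_tauB]
  refine ⟨rfl, ?_⟩
  rw [h.tauB_eq_inv_circ, h.sigB_tauB, h.tauB_circ, h.circ_sigB_tauB,
    h.inv_circ_circ_circ]

end IsLeftBrace

end

/-- For a left brace `(A, +, ·)` with circle group `(A, ∘)`, the map
`ř(x,y) = (σ_x(y), τ_y(x))` satisfies the set-theoretic braid relation. -/
theorem brace_braid {A : Type*} [AddCommGroup A] (mul : A → A → A) (inv : A → A)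
    (hdist : ∀ a b c : A, mul a (b + c) = mul a b + mul a c)
    (hassoc : ∀ a b c : A, circ mul (circ mul a b) c = circ mul a (circ mul b c))
    (hid : ∀ a : A, circ mul 0 a = a ∧ circ mul a 0 = a)
    (hcinv : ∀ a : A, circ mul (inv a) a = 0 ∧ circ mul a (inv a) = 0) :
    rFun12 (sigB mul) (tauB mul inv) ∘ rFun23 (sigB mul) (tauB mul inv)
        ∘ rFun12 (sigB mul) (tauB mul inv)
      = rFun23 (sigB mul) (tauB mul inv) ∘ rFun12 (sigB mul) (tauB mul inv)
        ∘ rFun23 (sigB mul) (tauB mul inv) := by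
  have h : IsLeftBrace mul inv :=
    ⟨hdist, hassoc, fun a => (hid a).1, fun a => (hcinv a).1, fun a => (hcinv a).2⟩
  funext ⟨x, y, z⟩
  rw [h.braid_left_apply, h.braid_right_apply]
end

section
/- Let X be a finite set, σ, τ : X → X bijections with σ∘τ = τ∘σ = id_X. Then ř = Σ_{x,y∈X} e_{x,σ(y)} ⊗ e_{y,τ(x)} satisfies the braid relation ř₁₂ ř₂₃ ř₁₂ = ř₂₃ ř₁₂ ř₂₃ on V ⊗ V ⊗ V where V = ℂ^|X|. -/
open Matrix

/-- Elementary matrix `e_{x,y}` with a single `1` in entry `(x,y)`. -/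
noncomputable def eM {X : Type*} [DecidableEq X] (x y : X) : Matrix X X ℂ :=
  Matrix.single x y 1

/-- Kronecker (tensor) product of two `X × X` matrices, indexed by `X × X`. -/
def kron2 {X : Type*} (A B : Matrix X X ℂ) : Matrix (X × X) (X × X) ℂ :=
  Matrix.of fun p q => A p.1 q.1 * B p.2 q.2

/-- The linearized set-theoretic solution `ř = Σ_{x,y} e_{x,σ_x(y)} ⊗ e_{y,τ_y(x)}`. -/
noncomputable def rcheckMat {X : Type*} [DecidableEq X] [Fintype X] (σ τ : X → X → X) :
    Matrix (X × X) (X × X) ℂ :=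
  ∑ x : X, ∑ y : X, kron2 (eM x (σ x y)) (eM y (τ y x))

/-- The permutation operator `P = Σ_{x,y} e_{x,y} ⊗ e_{y,x}`. -/
noncomputable def Pmat (X : Type*) [DecidableEq X] [Fintype X] :
    Matrix (X × X) (X × X) ℂ :=
  ∑ x : X, ∑ y : X, kron2 (eM x y) (eM y x)

/-- A matrix on `V ⊗ V` acting on legs (0,1) of `V ⊗ V ⊗ V`. -/
def leg01 {X : Type*} [DecidableEq X] (M : Matrix (X × X) (X × X) ℂ) :
    Matrix (X × X × X) (X × X × X) ℂ :=
  Matrix.of fun p q => M (p.1, p.2.1) (q.1, q.2.1) * (if p.2.2 = q.2.2 then 1 else 0)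

/-- A matrix on `V ⊗ V` acting on legs (1,2) of `V ⊗ V ⊗ V`. -/
def leg12 {X : Type*} [DecidableEq X] (M : Matrix (X × X) (X × X) ℂ) :
    Matrix (X × X × X) (X × X × X) ℂ :=
  Matrix.of fun p q => (if p.1 = q.1 then 1 else 0) * M p.2 q.2

/-- A matrix on `V ⊗ V` acting on legs (0,2) of `V ⊗ V ⊗ V`. -/
def leg02 {X : Type*} [DecidableEq X] (M : Matrix (X × X) (X × X) ℂ) :
    Matrix (X × X × X) (X × X × X) ℂ :=
  Matrix.of fun p q => M (p.1, p.2.2) (q.1, q.2.2) * (if p.2.1 = q.2.1 then 1 else 0)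

/-- Triple Kronecker product indexed by `X × X × X`. -/
def kron3 {X : Type*} (A B C : Matrix X X ℂ) : Matrix (X × X × X) (X × X × X) ℂ :=
  Matrix.of fun p q => A p.1 q.1 * B p.2.1 q.2.1 * C p.2.2 q.2.2
/-!
`ř` is the permutation matrix of the set map `(x, y) ↦ (σ y, τ x)`, and placing it on two legs of
`V ⊗ V ⊗ V` gives the permutation matrices of `ř × id` and `id × ř`. Since permutation matrices
multiply by composing maps, the braid relation reduces to the identity
`ř₁₂ ř₂₃ ř₁₂ = ř₂₃ ř₁₂ ř₂₃ : (a, b, c) ↦ (σ² c, b, τ² a)` of maps `X³ → X³`, which uses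
`τ ∘ σ = id` on one side and `σ ∘ τ = id` on the other.
-/

section FunMatrix

variable {α R : Type*} [DecidableEq α] [Semiring R]

def funMatrix (F : α → α) : Matrix α α R :=
  Matrix.of fun p q => if q = F p then 1 else 0

theorem funMatrix_mul [Fintype α] (F G : α → α) :
    (funMatrix F * funMatrix G : Matrix α α R) = funMatrix (G ∘ F) := by
  ext p q
  rw [Matrix.mul_apply, Finset.sum_eq_single (F p)]
  · simp [funMatrix]
  · intro x _ hx
    simp [funMatrix, hx]
  · simp

end FunMatrix

section Legs

variable {X : Type*} [DecidableEq X]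

theorem leg01_funMatrix (f : X × X → X × X) :
    leg01 (funMatrix f) = funMatrix fun p : X × X × X =>
      ((f (p.1, p.2.1)).1, (f (p.1, p.2.1)).2, p.2.2) := by
  ext ⟨a, b, c⟩ ⟨d, e, g⟩
  by_cases h : (d, e) = f (a, b) <;> by_cases h' : c = g <;>
    simp_all [leg01, funMatrix, Prod.ext_iff, eq_comm]

theorem leg12_funMatrix (f : X × X → X × X) :
    leg12 (funMatrix f) = funMatrix fun p : X × X × X => (p.1, f p.2) := by
  ext ⟨a, b, c⟩ ⟨d, e, g⟩
  by_cases h : (e, g) = f (b, c) <;> by_cases h' : a = d <;>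
    simp_all [leg12, funMatrix, Prod.ext_iff, eq_comm]

variable [Fintype X] (σ τ : X → X → X)

theorem rcheckMat_eq_funMatrix : rcheckMat σ τ = funMatrix (rFun σ τ) := by
  ext ⟨a, b⟩ ⟨c, d⟩
  simp only [rcheckMat, Matrix.sum_apply, kron2, eM, Matrix.single, Matrix.of_apply]
  rw [Fintype.sum_eq_single a fun x hx => Finset.sum_eq_zero fun y _ => by simp [hx],
    Fintype.sum_eq_single b fun y hy => by simp [hy]]
  by_cases h : c = σ a b <;> by_cases h' : d = τ b a <;>
    simp [funMatrix, rFun, h, h', eq_comm]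

theorem leg01_rcheckMat : leg01 (rcheckMat σ τ) = funMatrix (rFun12 σ τ) := by
  rw [rcheckMat_eq_funMatrix, leg01_funMatrix]
  rfl

theorem leg12_rcheckMat : leg12 (rcheckMat σ τ) = funMatrix (rFun23 σ τ) := by
  rw [rcheckMat_eq_funMatrix, leg12_funMatrix]
  rfl

theorem rcheckMat_braid_of_rFun_braid
    (h : rFun12 σ τ ∘ rFun23 σ τ ∘ rFun12 σ τ = rFun23 σ τ ∘ rFun12 σ τ ∘ rFun23 σ τ) :
    leg01 (rcheckMat σ τ) * leg12 (rcheckMat σ τ) * leg01 (rcheckMat σ τ)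
      = leg12 (rcheckMat σ τ) * leg01 (rcheckMat σ τ) * leg12 (rcheckMat σ τ) := by
  simp only [leg01_rcheckMat, leg12_rcheckMat, funMatrix_mul, ← Function.comp_assoc, h]

end Legs

theorem rFun_braid_of_inverse {X : Type*} {σ τ : X → X}
    (hστ : Function.RightInverse τ σ) (hτσ : Function.LeftInverse τ σ) :
    rFun12 (fun _ => σ) (fun _ => τ) ∘ rFun23 (fun _ => σ) (fun _ => τ)
        ∘ rFun12 (fun _ => σ) (fun _ => τ)
      = rFun23 (fun _ => σ) (fun _ => τ) ∘ rFun12 (fun _ => σ) (fun _ => τ)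
        ∘ rFun23 (fun _ => σ) (fun _ => τ) := by
  funext ⟨a, b, c⟩
  simp [rFun12, rFun23, hστ b, hτσ b]

/-- Lyubashenko's solution `ř = Σ_{x,y} e_{x,σ(y)} ⊗ e_{y,τ(x)}` (with `σ, τ` mutually
inverse bijections) satisfies the braid relation `ř₁₂ ř₂₃ ř₁₂ = ř₂₃ ř₁₂ ř₂₃`. -/
theorem lyubashenko_braid {X : Type*} [DecidableEq X] [Fintype X] (σ τ : X → X)
    (hστ : σ ∘ τ = id) (hτσ : τ ∘ σ = id) :
    leg01 (∑ x : X, ∑ y : X, kron2 (eM x (σ y)) (eM y (τ x)))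
        * leg12 (∑ x : X, ∑ y : X, kron2 (eM x (σ y)) (eM y (τ x)))
        * leg01 (∑ x : X, ∑ y : X, kron2 (eM x (σ y)) (eM y (τ x)))
      = leg12 (∑ x : X, ∑ y : X, kron2 (eM x (σ y)) (eM y (τ x)))
        * leg01 (∑ x : X, ∑ y : X, kron2 (eM x (σ y)) (eM y (τ x)))
        * leg12 (∑ x : X, ∑ y : X, kron2 (eM x (σ y)) (eM y (τ x))) :=
  rcheckMat_braid_of_rFun_braid (fun _ => σ) (fun _ => τ)
    (rFun_braid_of_inverse (congrFun hστ) (congrFun hτσ))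
end

section
/- Let (X, ř) be a finite involutive non-degenerate set-theoretic solution, F = Σ_{x,y∈X} e_{x,x} ⊗ e_{σ_x(y),y}, and P the permutation operator. Then F is invertible with F⁻¹ = Σ_{x,y∈X} e_{x,x} ⊗ e_{y,σ_x(y)}, and ř = F⁻¹ P F. -/
open Matrix

/-!
All matrices involved are permutation matrices: `F⁻¹`, `P` and `F` are the matrices of the
bijection `(x, y) ↦ (x, σ_x y)`, of the flip, and of the inverse of the former, and `ř` is the
matrix of `rFun`. Since matrices of bijections multiply by composition, everything reduces to
identities of maps on `X × X`; for `ř = F⁻¹ P F` it is `σ_{σ_x y}⁻¹ x = τ_y x`, the first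
involutivity identity.
-/

open Function Equiv

lemma kron2_eM_eM {X : Type*} [DecidableEq X] (a b c d : X) :
    kron2 (eM a b) (eM c d) = single (a, c) (b, d) 1 := by
  ext p q
  simp only [kron2, eM, of_apply, single_apply, Prod.ext_iff]
  split_ifs <;> simp_all

lemma sum_single_eq_toMatrix_toPEquiv {Y Z α : Type*} [Fintype Y] [DecidableEq Y]
    [DecidableEq Z] [AddCommMonoid α] [One α] (e : Y ≃ Z) :
    ∑ p, single p (e p) (1 : α) = e.toPEquiv.toMatrix := by
  ext p q
  simp [Matrix.sum_apply, single_apply, ite_and, eq_comm]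

lemma sum_single_symm_eq_toMatrix_toPEquiv {Y Z α : Type*} [Fintype Y] [Fintype Z]
    [DecidableEq Y] [DecidableEq Z] [AddCommMonoid α] [One α] (e : Y ≃ Z) :
    ∑ p, single (e p) p (1 : α) = e.symm.toPEquiv.toMatrix := by
  rw [← sum_single_eq_toMatrix_toPEquiv, ← e.sum_comp]
  simp_rw [symm_apply_apply]

noncomputable def twistEquiv {X : Type*} (σ : X → X → X) (hσ : ∀ x, Bijective (σ x)) :
    X × X ≃ X × X :=
  prodShear (Equiv.refl X) fun x => ofBijective (σ x) (hσ x)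

section

variable {X : Type*} [DecidableEq X] [Fintype X]

lemma sum_kron2_eM_eq_toMatrix_twistEquiv (σ : X → X → X) (hσ : ∀ x, Bijective (σ x)) :
    ∑ x : X, ∑ y : X, kron2 (eM x x) (eM y (σ x y)) = (twistEquiv σ hσ).toPEquiv.toMatrix := by
  simp_rw [kron2_eM_eM, ← sum_single_eq_toMatrix_toPEquiv, Fintype.sum_prod_type]
  rfl

lemma sum_kron2_eM_eq_toMatrix_twistEquiv_symm (σ : X → X → X) (hσ : ∀ x, Bijective (σ x)) :
    ∑ x : X, ∑ y : X, kron2 (eM x x) (eM (σ x y) y) = (twistEquiv σ hσ).symm.toPEquiv.toMatrix := by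
  simp_rw [kron2_eM_eM, ← sum_single_symm_eq_toMatrix_toPEquiv, Fintype.sum_prod_type]
  rfl

lemma Pmat_eq_toMatrix_prodComm : Pmat X = (prodComm X X).toPEquiv.toMatrix := by
  simp_rw [Pmat, kron2_eM_eM, ← sum_single_eq_toMatrix_toPEquiv, Fintype.sum_prod_type]
  rfl

lemma rcheckMat_eq_sum_single (σ τ : X → X → X) :
    rcheckMat σ τ = ∑ p, single p (rFun σ τ p) 1 := by
  simp_rw [rcheckMat, kron2_eM_eM, Fintype.sum_prod_type]
  rfl

end

lemma rFun_eq_twistEquiv_trans {X : Type*} (σ τ : X → X → X) (hσ : ∀ x, Bijective (σ x))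
    (hinv : ∀ x y, σ (σ x y) (τ y x) = x) :
    rFun σ τ = (twistEquiv σ hσ).trans ((prodComm X X).trans (twistEquiv σ hσ).symm) := by
  funext p
  refine Prod.ext rfl ?_
  simp [twistEquiv, rFun, eq_symm_apply, hinv]

theorem twist_similarity_general {X : Type*} [DecidableEq X] [Fintype X] (σ τ : X → X → X)
    (hσ : ∀ x, Function.Bijective (σ x))
    (hinv : ∀ x y : X, σ (σ x y) (τ y x) = x ∧ τ (τ y x) (σ x y) = y) :
    (∑ x : X, ∑ y : X, kron2 (eM x x) (eM (σ x y) y))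
        * (∑ x : X, ∑ y : X, kron2 (eM x x) (eM y (σ x y))) = 1
    ∧ (∑ x : X, ∑ y : X, kron2 (eM x x) (eM y (σ x y)))
        * (∑ x : X, ∑ y : X, kron2 (eM x x) (eM (σ x y) y)) = 1
    ∧ rcheckMat σ τ
        = (∑ x : X, ∑ y : X, kron2 (eM x x) (eM y (σ x y))) * Pmat X
          * (∑ x : X, ∑ y : X, kron2 (eM x x) (eM (σ x y) y)) := by
  rw [sum_kron2_eM_eq_toMatrix_twistEquiv σ hσ,
    sum_kron2_eM_eq_toMatrix_twistEquiv_symm σ hσ, Pmat_eq_toMatrix_prodComm,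
    rcheckMat_eq_sum_single, rFun_eq_twistEquiv_trans σ τ hσ fun x y => (hinv x y).1,
    sum_single_eq_toMatrix_toPEquiv]
  simp only [← PEquiv.toMatrix_trans, ← toPEquiv_trans, symm_trans_self, self_trans_symm,
    toPEquiv_refl, PEquiv.toMatrix_refl, trans_assoc, and_self]

/-- The twist `F = Σ_{x,y} e_{x,x} ⊗ e_{σ_x(y),y}` is invertible with inverse
`F⁻¹ = Σ_{x,y} e_{x,x} ⊗ e_{y,σ_x(y)}`, and `ř = F⁻¹ P F`. -/
theorem twist_similarity {X : Type*} [DecidableEq X] [Fintype X] (σ τ : X → X → X)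
    (hσ : ∀ x, Function.Bijective (σ x))
    (hτ : ∀ y, Function.Bijective (τ y))
    (hinv : ∀ x y : X, σ (σ x y) (τ y x) = x ∧ τ (τ y x) (σ x y) = y) :
    (∑ x : X, ∑ y : X, kron2 (eM x x) (eM (σ x y) y))
        * (∑ x : X, ∑ y : X, kron2 (eM x x) (eM y (σ x y))) = 1
    ∧ (∑ x : X, ∑ y : X, kron2 (eM x x) (eM y (σ x y)))
        * (∑ x : X, ∑ y : X, kron2 (eM x x) (eM (σ x y) y)) = 1
    ∧ rcheckMat σ τ
        = (∑ x : X, ∑ y : X, kron2 (eM x x) (eM y (σ x y))) * Pmat X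
          * (∑ x : X, ∑ y : X, kron2 (eM x x) (eM (σ x y) y)) :=
  twist_similarity_general σ τ hσ hinv
end

section
/- Let (X, ř) be a finite involutive non-degenerate set-theoretic solution of the braid equation. Define F = Σ_{η,x} e_{η,η} ⊗ e_{σ_η(x),x}, F₀₁,₂ = Σ_{η,x,y} e_{σ_η(x),σ_η(x)} ⊗ e_{τ_x(η),τ_x(η)} ⊗ e_{σ_η(σ_x(y)),y}, and F₀,₁₂ = Σ_{η,x,y} e_{σ_η(x),σ_η(x)} ⊗ e_{η,τ_x(η)} ⊗ e_{σ_x(y),y}. Then the cocycle condition holds: (F ⊗ I) F₀₁,₂ = (I ⊗ F) F₀,₁₂. -/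
open Matrix

/-! The twist `F` acts on `e_{a,b} ⊗ e_{c,d}` from the left by replacing `c` with `σ_a(c)`.
Hence both sides of the cocycle condition are sums of elementary tensors: the left one with
middle factor `e_{σ_{σ_η(x)}(τ_x(η)), τ_x(η)}`, the right one with `e_{η, τ_x(η)}` (its third
factor `e_{σ_x(y), y}` becomes `e_{σ_η(σ_x(y)), y}`). The two agree because involutivity of `ř`
gives `σ_{σ_η(x)}(τ_x(η)) = η`. -/

open scoped Kronecker

section Kronecker

variable {X : Type*}

theorem kron2_eq_kronecker (A B : Matrix X X ℂ) : kron2 A B = A ⊗ₖ B := rfl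

theorem kron3_eq_kronecker_kronecker (A B C : Matrix X X ℂ) :
    kron3 A B C = A ⊗ₖ (B ⊗ₖ C) := by
  ext p q
  simp [kron3, mul_assoc]

theorem kron3_eq_submatrix_kronecker (A B C : Matrix X X ℂ) :
    kron3 A B C = ((A ⊗ₖ B) ⊗ₖ C).submatrix (Equiv.prodAssoc X X X).symm
      (Equiv.prodAssoc X X X).symm := rfl

theorem kron2_mul_kron2 [Fintype X] (A B C D : Matrix X X ℂ) :
    kron2 A B * kron2 C D = kron2 (A * C) (B * D) :=
  (Matrix.mul_kronecker_mul A C B D).symm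

variable [DecidableEq X]

theorem leg12_eq_one_kronecker (M : Matrix (X × X) (X × X) ℂ) : leg12 M = 1 ⊗ₖ M := by
  ext p q
  simp [leg12, Matrix.one_apply]

theorem leg01_eq_submatrix_kronecker_one (M : Matrix (X × X) (X × X) ℂ) :
    leg01 M = (M ⊗ₖ 1).submatrix (Equiv.prodAssoc X X X).symm (Equiv.prodAssoc X X X).symm := by
  ext p q
  simp [leg01, Matrix.one_apply]

variable [Fintype X]

theorem leg01_mul_kron3 {M : Matrix (X × X) (X × X) ℂ} {A B A' B' : Matrix X X ℂ}
    (h : M * kron2 A B = kron2 A' B') (C : Matrix X X ℂ) :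
    leg01 M * kron3 A B C = kron3 A' B' C := by
  rw [leg01_eq_submatrix_kronecker_one, kron3_eq_submatrix_kronecker,
    Matrix.submatrix_mul_equiv, ← Matrix.mul_kronecker_mul, ← kron2_eq_kronecker, h, one_mul]
  exact (kron3_eq_submatrix_kronecker A' B' C).symm

theorem leg12_mul_kron3 {M : Matrix (X × X) (X × X) ℂ} {B C B' C' : Matrix X X ℂ}
    (h : M * kron2 B C = kron2 B' C') (A : Matrix X X ℂ) :
    leg12 M * kron3 A B C = kron3 A B' C' := by
  rw [leg12_eq_one_kronecker, kron3_eq_kronecker_kronecker, ← Matrix.mul_kronecker_mul,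
    ← kron2_eq_kronecker, h, one_mul, kron3_eq_kronecker_kronecker, kron2_eq_kronecker]

end Kronecker

/-- The twist `F` of the paper. -/
noncomputable def twist {X : Type*} [DecidableEq X] [Fintype X] (σ : X → X → X) :
    Matrix (X × X) (X × X) ℂ :=
  ∑ η : X, ∑ x : X, kron2 (eM η η) (eM (σ η x) x)

theorem twist_mul_kron2_eM {X : Type*} [DecidableEq X] [Fintype X] (σ : X → X → X)
    (a b c d : X) :
    twist σ * kron2 (eM a b) (eM c d) = kron2 (eM a b) (eM (σ a c) d) := by
  simp only [twist, Finset.sum_mul, kron2_mul_kron2]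
  rw [Fintype.sum_eq_single a, Fintype.sum_eq_single c]
  · simp [eM]
  · intro x hx
    simp [eM, hx, kron2_eq_kronecker]
  · intro η hη
    simp [eM, hη, kron2_eq_kronecker]

theorem sigma_sigma_tau_of_involutive {X : Type*} {σ τ : X → X → X}
    (hinv : Function.Involutive (rFun σ τ)) (η x : X) : σ (σ η x) (τ x η) = η :=
  congrArg Prod.fst (hinv (η, x))

theorem cocycle_condition_general {X : Type*} [DecidableEq X] [Fintype X] (σ τ : X → X → X)
    (hinv : Function.Involutive (rFun σ τ)) :
    leg01 (∑ η : X, ∑ x : X, kron2 (eM η η) (eM (σ η x) x))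
        * (∑ η : X, ∑ x : X, ∑ y : X,
            kron3 (eM (σ η x) (σ η x)) (eM (τ x η) (τ x η)) (eM (σ η (σ x y)) y))
      = leg12 (∑ η : X, ∑ x : X, kron2 (eM η η) (eM (σ η x) x))
        * (∑ η : X, ∑ x : X, ∑ y : X,
            kron3 (eM (σ η x) (σ η x)) (eM η (τ x η)) (eM (σ x y) y)) := by
  change leg01 (twist σ) * _ = leg12 (twist σ) * _
  simp only [Finset.mul_sum]
  refine Finset.sum_congr rfl fun η _ => Finset.sum_congr rfl fun x _ =>
    Finset.sum_congr rfl fun y _ => ?_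
  rw [leg01_mul_kron3 (twist_mul_kron2_eM σ _ _ _ _),
    leg12_mul_kron3 (twist_mul_kron2_eM σ _ _ _ _), sigma_sigma_tau_of_involutive hinv]

/-- The co-cycle condition `(F ⊗ I) F₀₁,₂ = (I ⊗ F) F₀,₁₂` for the set-theoretic twist
`F = Σ_{η,x} e_{η,η} ⊗ e_{σ_η(x),x}`. -/
theorem cocycle_condition {X : Type*} [DecidableEq X] [Fintype X] (σ τ : X → X → X)
    (hσ : ∀ x, Function.Bijective (σ x))
    (hτ : ∀ y, Function.Bijective (τ y))
    (hinv : Function.Involutive (rFun σ τ))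
    (hbraid : rFun12 σ τ ∘ rFun23 σ τ ∘ rFun12 σ τ
            = rFun23 σ τ ∘ rFun12 σ τ ∘ rFun23 σ τ)
    (hC1 : ∀ η x y : X, σ (σ η x) (σ (τ x η) y) = σ η (σ x y)) :
    leg01 (∑ η : X, ∑ x : X, kron2 (eM η η) (eM (σ η x) x))
        * (∑ η : X, ∑ x : X, ∑ y : X,
            kron3 (eM (σ η x) (σ η x)) (eM (τ x η) (τ x η)) (eM (σ η (σ x y)) y))
      = leg12 (∑ η : X, ∑ x : X, kron2 (eM η η) (eM (σ η x) x))
        * (∑ η : X, ∑ x : X, ∑ y : X,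
            kron3 (eM (σ η x) (σ η x)) (eM η (τ x η)) (eM (σ x y) y)) :=
  cocycle_condition_general σ τ hinv
end

section
/- Let (X, ř) be a finite involutive non-degenerate set-theoretic solution, r = Př, F₀₁₂ = Σ_{η,x,y} e_{η,η} ⊗ e_{σ_η(x),x} ⊗ e_{σ_η(σ_x(y)),y}, and F₁₂₀ obtained from F₀₁₂ by cyclically permuting tensor legs (0,1,2) → (1,2,0). Then the monodromy factorizes: r₀₂ r₀₁ = F₁₂₀⁻¹ F₀₁₂. -/
open Matrix

/-!
Every matrix in the identity is the linearization `e_q ↦ e_{f q}` of a map `f` of `X × X` or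
`X × X × X`: since `ř` is involutive, `r = Př` linearizes `swap ∘ ř`; `F₀₁₂` linearizes
`twist σ : (η, x, y) ↦ (η, σ_η x, σ_η (σ_x y))`, which is bijective because every `σ_x` is; and
`F₁₂₀` linearizes the conjugate of `twist σ` by the cyclic rotation of the legs. Linearization
turns composition into matrix product, so the claim `F₁₂₀ r₀₂ r₀₁ = F₀₁₂` reduces to an identity
of maps on `X × X × X`, which follows from the first component `σ_{σ_x y} (τ_y x) = x` of
involutivity and the cocycle condition on `σ`.
-/

noncomputable def linMatrix (R : Type*) [Zero R] [One R] {α β : Type*} [DecidableEq β]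
    (f : α → β) : Matrix β α R :=
  Matrix.of fun p q => if p = f q then 1 else 0

section linMatrix

variable {R : Type*} {α β γ ι : Type*}

theorem linMatrix_mul [NonAssocSemiring R] [Fintype β] [DecidableEq β] [DecidableEq γ]
    (f : β → γ) (g : α → β) :
    linMatrix R f * linMatrix R g = linMatrix R (f ∘ g) := by
  ext p q
  simp [linMatrix, Matrix.mul_apply]

theorem linMatrix_id [Zero R] [One R] [DecidableEq α] : linMatrix R (id : α → α) = 1 := by
  ext p q
  simp [linMatrix, Matrix.one_apply]

theorem inv_linMatrix [CommRing R] [Fintype α] [DecidableEq α] (e : α ≃ α) :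
    (linMatrix R e)⁻¹ = linMatrix R e.symm := by
  refine Matrix.inv_eq_left_inv ?_
  rw [linMatrix_mul, e.symm_comp_self, linMatrix_id]

theorem sum_single_eq_linMatrix [AddCommMonoid R] [One R] [Fintype ι] [DecidableEq α]
    [DecidableEq β] (f : ι → β) (e : ι ≃ α) :
    ∑ i, Matrix.single (f i) (e i) (1 : R) = linMatrix R (f ∘ e.symm) := by
  ext p q
  rw [Matrix.sum_apply, Finset.sum_eq_single (e.symm q)]
  · simp [linMatrix, Matrix.single_apply, eq_comm]
  · intro i _ hi
    have : e i ≠ q := fun h => hi (e.eq_symm_apply.mpr h)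
    simp [this]
  · simp

end linMatrix

section Legs

variable {X : Type*} [DecidableEq X]

theorem kron2_eM (a b c d : X) : kron2 (eM a b) (eM c d) = Matrix.single (a, c) (b, d) 1 := by
  ext ⟨_, _⟩ ⟨_, _⟩
  simp only [kron2, eM, Matrix.of_apply, Matrix.single_apply, Prod.mk.injEq]
  split_ifs <;> simp_all

theorem kron3_eM (a b c d e f : X) :
    kron3 (eM a b) (eM c d) (eM e f) = Matrix.single (a, c, e) (b, d, f) 1 := by
  ext ⟨_, _, _⟩ ⟨_, _, _⟩
  simp only [kron3, eM, Matrix.of_apply, Matrix.single_apply, Prod.mk.injEq]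
  split_ifs <;> simp_all

def onLegs01 (m : X × X → X × X) (p : X × X × X) : X × X × X :=
  ((m (p.1, p.2.1)).1, (m (p.1, p.2.1)).2, p.2.2)

def onLegs02 (m : X × X → X × X) (p : X × X × X) : X × X × X :=
  ((m (p.1, p.2.2)).1, p.2.1, (m (p.1, p.2.2)).2)

theorem leg01_linMatrix (m : X × X → X × X) :
    leg01 (linMatrix ℂ m) = linMatrix ℂ (onLegs01 m) := by
  ext ⟨_, _, _⟩ ⟨_, _, _⟩
  simp only [leg01, linMatrix, onLegs01, Matrix.of_apply, Prod.ext_iff]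
  split_ifs <;> simp_all

theorem leg02_linMatrix (m : X × X → X × X) :
    leg02 (linMatrix ℂ m) = linMatrix ℂ (onLegs02 m) := by
  ext ⟨_, _, _⟩ ⟨_, _, _⟩
  simp only [leg02, linMatrix, onLegs02, Matrix.of_apply, Prod.ext_iff]
  split_ifs <;> simp_all

end Legs

namespace BraidSolution

variable {X : Type*}

def rotateLegs : Equiv.Perm (X × X × X) where
  toFun p := (p.2.2, p.1, p.2.1)
  invFun p := (p.2.1, p.2.2, p.1)
  left_inv _ := rfl
  right_inv _ := rfl

def twist (σ : X → X → X) (p : X × X × X) : X × X × X :=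
  (p.1, σ p.1 p.2.1, σ p.1 (σ p.2.1 p.2.2))

noncomputable def twistEquiv (σ : X → X → X) (hσ : ∀ x, Function.Bijective (σ x)) :
    Equiv.Perm (X × X × X) :=
  let σe x := Equiv.ofBijective (σ x) (hσ x)
  Equiv.prodShear (Equiv.refl X) fun η => Equiv.prodShear (σe η) fun x => (σe x).trans (σe η)

theorem rotateLegs_twist_monodromy (σ τ : X → X → X)
    (hinv₁ : ∀ x y, σ (σ x y) (τ y x) = x)
    (hC1 : ∀ η x y : X, σ (σ η x) (σ (τ x η) y) = σ η (σ x y)) (p : X × X × X) :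
    let r := Prod.swap ∘ rFun σ τ
    rotateLegs (twist σ (rotateLegs.symm (onLegs02 r (onLegs01 r p)))) = twist σ p := by
  obtain ⟨a, b, c⟩ := p
  simp [rotateLegs, twist, onLegs01, onLegs02, rFun, hinv₁, hC1]

variable [DecidableEq X] [Fintype X]

theorem sum_kron2_eq_linMatrix {σ τ : X → X → X} (hinv : Function.Involutive (rFun σ τ)) :
    ∑ x : X, ∑ y : X, kron2 (eM y (σ x y)) (eM x (τ y x))
      = linMatrix ℂ (Prod.swap ∘ rFun σ τ) := by
  simp only [kron2_eM, ← Fintype.sum_prod_type']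
  exact sum_single_eq_linMatrix Prod.swap (hinv.toPerm _)

theorem sum_kron3_eq_linMatrix_twist (σ : X → X → X) :
    ∑ η : X, ∑ x : X, ∑ y : X, kron3 (eM η η) (eM (σ η x) x) (eM (σ η (σ x y)) y)
      = linMatrix ℂ (twist σ) := by
  simp only [kron3_eM, ← Fintype.sum_prod_type']
  exact sum_single_eq_linMatrix (twist σ) (Equiv.refl _)

theorem sum_kron3_eq_linMatrix_rotateLegs_twist (σ : X → X → X) :
    ∑ η : X, ∑ x : X, ∑ y : X, kron3 (eM (σ η (σ x y)) y) (eM η η) (eM (σ η x) x)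
      = linMatrix ℂ (rotateLegs ∘ twist σ ∘ rotateLegs.symm) := by
  simp only [kron3_eM, ← Fintype.sum_prod_type']
  exact sum_single_eq_linMatrix (rotateLegs ∘ twist σ) rotateLegs

end BraidSolution

open BraidSolution in
theorem monodromy_factorization_general {X : Type*} [DecidableEq X] [Fintype X] (σ τ : X → X → X)
    (hσ : ∀ x, Function.Bijective (σ x))
    (hinv : Function.Involutive (rFun σ τ))
    (hC1 : ∀ η x y : X, σ (σ η x) (σ (τ x η) y) = σ η (σ x y)) :
    leg02 (∑ x : X, ∑ y : X, kron2 (eM y (σ x y)) (eM x (τ y x)))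
        * leg01 (∑ x : X, ∑ y : X, kron2 (eM y (σ x y)) (eM x (τ y x)))
      = (∑ η : X, ∑ x : X, ∑ y : X,
            kron3 (eM (σ η (σ x y)) y) (eM η η) (eM (σ η x) x))⁻¹
        * (∑ η : X, ∑ x : X, ∑ y : X,
            kron3 (eM η η) (eM (σ η x) x) (eM (σ η (σ x y)) y)) := by
  have hF₁₂₀ : rotateLegs ∘ twist σ ∘ rotateLegs.symm
      = ⇑(rotateLegs.permCongr (twistEquiv σ hσ)) := rfl
  rw [sum_kron2_eq_linMatrix hinv, leg02_linMatrix, leg01_linMatrix, linMatrix_mul,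
    sum_kron3_eq_linMatrix_rotateLegs_twist, hF₁₂₀, inv_linMatrix, sum_kron3_eq_linMatrix_twist,
    linMatrix_mul]
  congr 1
  funext p
  refine (Equiv.eq_symm_apply _).mpr ?_
  exact rotateLegs_twist_monodromy σ τ (fun x y => congrArg Prod.fst (hinv (x, y))) hC1 p

/-- Factorization of the monodromy: `r₀₂ r₀₁ = F₁₂₀⁻¹ F₀₁₂`, where
`F₀₁₂ = Σ_{η,x,y} e_{η,η} ⊗ e_{σ_η(x),x} ⊗ e_{σ_η(σ_x(y)),y}` and `F₁₂₀` is its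
cyclic relabeling of tensor legs `(0,1,2) → (1,2,0)`. -/
theorem monodromy_factorization {X : Type*} [DecidableEq X] [Fintype X] (σ τ : X → X → X)
    (hσ : ∀ x, Function.Bijective (σ x))
    (hτ : ∀ y, Function.Bijective (τ y))
    (hinv : Function.Involutive (rFun σ τ))
    (hbraid : rFun12 σ τ ∘ rFun23 σ τ ∘ rFun12 σ τ
            = rFun23 σ τ ∘ rFun12 σ τ ∘ rFun23 σ τ)
    (hC1 : ∀ η x y : X, σ (σ η x) (σ (τ x η) y) = σ η (σ x y))
    (hC2 : ∀ η x y : X, τ (τ y x) (τ (σ x y) η) = τ y (τ x η)) :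
    leg02 (∑ x : X, ∑ y : X, kron2 (eM y (σ x y)) (eM x (τ y x)))
        * leg01 (∑ x : X, ∑ y : X, kron2 (eM y (σ x y)) (eM x (τ y x)))
      = (∑ η : X, ∑ x : X, ∑ y : X,
            kron3 (eM (σ η (σ x y)) y) (eM η η) (eM (σ η x) x))⁻¹
        * (∑ η : X, ∑ x : X, ∑ y : X,
            kron3 (eM η η) (eM (σ η x) x) (eM (σ η (σ x y)) y)) :=
  monodromy_factorization_general σ τ hσ hinv hC1
end
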